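/- Let S = ⟨e, e+d, e+2d, e+3d⟩ with gcd(e,d) = 1 and e ≥ 4 (embedding dimension 4 arithmetic case). Then d_max(S) equals the nearest integer to (e+2)²/12. -/

import Mathlib

/-!
Write a factorization `c` over `(e, e+d, e+2d, e+3d)` by its length `c₀ + c₁ + c₂ + c₃` and its
weight `c₁ + 2c₂ + 3c₃`; its value is `length * e + weight * d`. If the weight is at least `e`,
trading weight `e` for length `d` gives a longer factorization, so maximal-length factorizations
of an element all have the same length and the same weight `m < e`. Such a factorization is
determined by `(c₂, c₃)`, i.e. by a partition of `m` into parts of size at most `3`, so there are at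
most as many as partitions of `e - 1` into such parts. Since `gcd(e, d) = 1`, the element
`(e - 1)(e + d)` has order `e - 1`, and its maximal-length factorizations realise every partition
of `e - 1`. Their number is `⌊((e + 2)² + 6) / 12⌋`, by a recursion in steps of `3`.
-/

open Finset

/-- The set of factorizations of `n` over the generating tuple `g`. -/
def Fac {t : ℕ} (g : Fin (t + 1) → ℕ) (n : ℕ) : Set (Fin (t + 1) → ℕ) :=
  {c | ∑ i, c i * g i = n}

/-- The numerical semigroup generated by the tuple `g`. -/
def Sg {t : ℕ} (g : Fin (t + 1) → ℕ) : Set ℕ :=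
  {n | ∃ c : Fin (t + 1) → ℕ, ∑ i, c i * g i = n}

/-- The order of `n`: the maximal length of a factorization of `n` over `g`. -/
noncomputable def ordOf {t : ℕ} (g : Fin (t + 1) → ℕ) (n : ℕ) : ℕ :=
  sSup {r | ∃ c ∈ Fac g n, ∑ i, c i = r}

/-- The minimal length of a factorization of `n` over `g`. -/
noncomputable def minordOf {t : ℕ} (g : Fin (t + 1) → ℕ) (n : ℕ) : ℕ :=
  sInf {r | ∃ c ∈ Fac g n, ∑ i, c i = r}

/-- The denumerant of `n` with respect to `g`. -/
noncomputable def denum {t : ℕ} (g : Fin (t + 1) → ℕ) (n : ℕ) : ℕ :=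
  (Fac g n).ncard

/-- The maximal denumerant of an element: the number of maximal-length factorizations. -/
noncomputable def dmaxEl {t : ℕ} (g : Fin (t + 1) → ℕ) (n : ℕ) : ℕ :=
  {c ∈ Fac g n | ∑ i, c i = ordOf g n}.ncard

/-- The maximal denumerant of the semigroup generated by `g`. -/
noncomputable def dmax {t : ℕ} (g : Fin (t + 1) → ℕ) : ℕ :=
  sSup {m | ∃ n ∈ Sg g, dmaxEl g n = m}

/-- The generating tuple `D` of the blowup: `{e, a₁ - e, …, a_t - e}`. -/
def blowD {t : ℕ} (g : Fin (t + 1) → ℕ) : Fin (t + 1) → ℕ :=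
  fun i => if i = 0 then g 0 else g i - g 0

/-- The adjustment of `n`:  `n - ord(n) * e`. -/
noncomputable def adj {t : ℕ} (g : Fin (t + 1) → ℕ) (n : ℕ) : ℕ :=
  n - ordOf g n * g 0

/-- The Apery set with respect to `u` of the semigroup generated by `g`. -/
def Ap {t : ℕ} (g : Fin (t + 1) → ℕ) (u : ℕ) : Set ℕ :=
  {w ∈ Sg g | ¬ ∃ b ∈ Sg g, w = b + u}

/-- `g` is the (strictly increasing) minimal generating tuple of a numerical semigroup
with multiplicity `g 0`. -/
structure IsNumSgp {t : ℕ} (g : Fin (t + 1) → ℕ) : Prop where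
  mono : StrictMono g
  pos : 0 < g 0
  gcd_eq_one : Finset.gcd Finset.univ g = 1
  minimal : ∀ i, ∀ c : Fin (t + 1) → ℕ, ∑ j, c j * g j = g i → c = Pi.single i 1

/-- `S` is additive: `ord(u + e) = ord(u) + 1` for all `u ∈ S`. -/
def IsAdditive {t : ℕ} (g : Fin (t + 1) → ℕ) : Prop :=
  ∀ u ∈ Sg g, ordOf g (u + g 0) = ordOf g u + 1

/-- Membership of an integer in a set of naturals. -/
def ZMem (T : Set ℕ) (z : ℤ) : Prop := 0 ≤ z ∧ z.toNat ∈ T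

/-- The Frobenius number: the largest integer not in `T`. -/
noncomputable def Frob (T : Set ℕ) : ℤ := sSup {z : ℤ | ¬ ZMem T z}

/-- `T` is symmetric: whenever `x + y = F(T)`, exactly one of `x`, `y` lies in `T`. -/
def Symm (T : Set ℕ) : Prop := ∀ x y : ℤ, x + y = Frob T → (ZMem T x ↔ ¬ ZMem T y)

/-- An abstract numerical semigroup. -/
structure IsNumSemigroup (T : Set ℕ) : Prop where
  zero_mem : 0 ∈ T
  add_mem : ∀ a ∈ T, ∀ b ∈ T, a + b ∈ T
  cofinite : Tᶜ.Finite

/-- The Apery set of an abstract numerical semigroup. -/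
def ApS (T : Set ℕ) (u : ℕ) : Set ℕ := {w ∈ T | ¬ ∃ b ∈ T, w = b + u}

section Order

variable {t : ℕ} {g : Fin (t + 1) → ℕ} {n : ℕ}

lemma bddAbove_factorization_lengths (hg : ∀ i, 0 < g i) (n : ℕ) :
    BddAbove {r | ∃ c ∈ Fac g n, ∑ i, c i = r} := by
  refine ⟨n, ?_⟩
  rintro _ ⟨c, hc, rfl⟩
  calc ∑ i, c i ≤ ∑ i, c i * g i := sum_le_sum fun i _ => Nat.le_mul_of_pos_right _ (hg i)
    _ = n := hc

lemma sum_le_ordOf (hg : ∀ i, 0 < g i) {c : Fin (t + 1) → ℕ} (hc : c ∈ Fac g n) :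
    ∑ i, c i ≤ ordOf g n :=
  le_csSup (bddAbove_factorization_lengths hg n) ⟨c, hc, rfl⟩

lemma exists_sum_eq_ordOf (hg : ∀ i, 0 < g i) (hn : n ∈ Sg g) :
    ∃ c ∈ Fac g n, ∑ i, c i = ordOf g n := by
  obtain ⟨c, hc⟩ := hn
  exact Nat.sSup_mem (s := {r | ∃ c ∈ Fac g n, ∑ i, c i = r}) ⟨_, c, hc, rfl⟩
    (bddAbove_factorization_lengths hg n)

end Order

section SmallPartitions

/-- A partition of `m` into parts of size at most `3`, recorded by its numbers of parts `2`
and `3`. -/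
def smallPartitions (m : ℕ) : Finset (ℕ × ℕ) :=
  (range (m + 1) ×ˢ range (m + 1)).filter fun p => 2 * p.1 + 3 * p.2 ≤ m

lemma mem_smallPartitions {m : ℕ} {p : ℕ × ℕ} :
    p ∈ smallPartitions m ↔ 2 * p.1 + 3 * p.2 ≤ m := by
  simp only [smallPartitions, mem_filter, mem_product, mem_range]
  omega

lemma smallPartitions_mono {m m' : ℕ} (h : m ≤ m') : smallPartitions m ⊆ smallPartitions m' :=
  fun p hp => mem_smallPartitions.2 (by have := mem_smallPartitions.1 hp; omega)

lemma card_smallPartitions_add_three (m : ℕ) :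
    #(smallPartitions (m + 3)) = #(smallPartitions m) + ((m + 3) / 2 + 1) := by
  rw [← card_filter_add_card_filter_not (s := smallPartitions (m + 3)) (fun p => p.2 ≠ 0)]
  congr 1
  · refine card_nbij' (fun p => (p.1, p.2 - 1)) (fun p => (p.1, p.2 + 1)) ?_ ?_ ?_ ?_ <;>
      intro p hp <;>
      simp only [coe_filter, Set.mem_ofPred_eq, mem_coe, mem_smallPartitions, Prod.ext_iff,
        true_and] at hp ⊢ <;>
      omega
  · rw [← card_range ((m + 3) / 2 + 1)]
    refine card_nbij' Prod.fst (fun b => (b, 0)) ?_ ?_ ?_ ?_ <;>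
      intro p hp <;>
      simp only [coe_filter, Set.mem_ofPred_eq, mem_smallPartitions, coe_range,
        Set.mem_Iio, Prod.ext_iff, true_and] at hp ⊢ <;>
      omega

lemma card_smallPartitions (m : ℕ) : #(smallPartitions m) = ((m + 3) ^ 2 + 6) / 12 := by
  induction m using Nat.strong_induction_on with
  | _ m ih =>
    match m with
    | 0 | 1 | 2 | 3 | 4 | 5 => decide
    | k + 6 =>
      have hsq : (k + 6 + 3) ^ 2 + 6 = (k + 3) ^ 2 + 6 + (k + 6) * 12 := by ring
      rw [card_smallPartitions_add_three (k + 3), card_smallPartitions_add_three k,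
        ih k (by omega), hsq, Nat.add_mul_div_right _ _ (by norm_num)]
      omega

end SmallPartitions

lemma round_natCast_div_twelve (k : ℕ) : round ((k : ℚ) / 12) = ((k + 6) / 12 : ℕ) := by
  rw [round_eq, show (k : ℚ) / 12 + 1 / 2 = ((k + 6 : ℕ) : ℚ) / (12 : ℕ) by push_cast; ring,
    Rat.floor_natCast_div_natCast]
  push_cast
  rfl

lemma le_of_mul_add_mul_eq_of_coprime {e d L m k k' : ℕ} (hcop : Nat.Coprime e d)
    (hk' : k' < e) (h : L * e + m * d = k * e + k' * d) : L ≤ k := by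
  by_contra! hkL
  have hz : ((L : ℤ) - k) * e = ((k' : ℤ) - m) * d := by
    have hℤ : (L * e + m * d : ℤ) = k * e + k' * d := by exact_mod_cast h
    linear_combination hℤ
  have hpos : (0 : ℤ) < k' - m := by
    have : (0 : ℤ) < (L - k) * e := mul_pos (by omega) (by omega)
    nlinarith
  have hdvd : (e : ℤ) ∣ k' - m :=
    (Nat.isCoprime_iff_coprime.2 hcop).dvd_of_dvd_mul_right ⟨L - k, by rw [← hz, mul_comm]⟩
  have := Int.le_of_dvd hpos hdvd
  omega

namespace ArithmeticGenerators

def gen (e d : ℕ) : Fin 4 → ℕ := fun i => e + (i : ℕ) * d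

def len (c : Fin 4 → ℕ) : ℕ := c 0 + c 1 + c 2 + c 3

def weight (c : Fin 4 → ℕ) : ℕ := c 1 + 2 * c 2 + 3 * c 3

def withLenWeight (L m : ℕ) : Set (Fin 4 → ℕ) := {c | len c = L ∧ weight c = m}

variable {e d n L m : ℕ}

lemma sum_eq_len (c : Fin 4 → ℕ) : ∑ i, c i = len c := by
  simp [Fin.sum_univ_four, len]

lemma weight_le_three_mul_len (c : Fin 4 → ℕ) : weight c ≤ 3 * len c := by
  unfold weight len
  omega

lemma gen_pos (he : 0 < e) (i : Fin 4) : 0 < gen e d i :=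
  Nat.add_pos_left he _

lemma sum_mul_gen (c : Fin 4 → ℕ) : ∑ i, c i * gen e d i = len c * e + weight c * d := by
  rw [Fin.sum_univ_four]
  show c 0 * (e + 0 * d) + c 1 * (e + 1 * d) + c 2 * (e + 2 * d) + c 3 * (e + 3 * d) = _
  unfold len weight
  ring

lemma mem_fac_gen {c : Fin 4 → ℕ} : c ∈ Fac (gen e d) n ↔ len c * e + weight c * d = n := by
  rw [Fac, Set.mem_ofPred_eq, sum_mul_gen]

lemma exists_mem_withLenWeight (h : m ≤ 3 * L) : ∃ c, c ∈ withLenWeight L m :=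
  ⟨![L - (m + 2) / 3, m % 3 % 2, m % 3 / 2, m / 3], by
    simp only [withLenWeight, len, weight, Set.mem_ofPred_eq, Matrix.cons_val_zero,
      Matrix.cons_val_one, Matrix.cons_val]
    omega⟩

lemma mem_fac_gen_of_mem_withLenWeight {c : Fin 4 → ℕ} (hc : c ∈ withLenWeight L m) :
    c ∈ Fac (gen e d) (L * e + m * d) := by
  rw [mem_fac_gen, hc.1, hc.2]

lemma injOn_withLenWeight (L m : ℕ) :
    Set.InjOn (fun c : Fin 4 → ℕ => (c 2, c 3)) (withLenWeight L m) := by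
  rintro c ⟨hlen, hwt⟩ c' ⟨hlen', hwt'⟩ h
  simp only [Prod.ext_iff] at h
  unfold len weight at *
  funext i
  fin_cases i <;> simp only [Fin.zero_eta, Fin.mk_one, Fin.reduceFinMk, Fin.isValue] <;>
    omega

lemma image_withLenWeight_subset (L m : ℕ) :
    (fun c : Fin 4 → ℕ => (c 2, c 3)) '' withLenWeight L m ⊆ smallPartitions m := by
  rintro _ ⟨c, ⟨-, hwt⟩, rfl⟩
  rw [mem_coe, mem_smallPartitions, ← hwt, weight]
  dsimp only
  omega

lemma image_withLenWeight_of_le (h : m ≤ L) :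
    (fun c : Fin 4 → ℕ => (c 2, c 3)) '' withLenWeight L m = smallPartitions m := by
  refine (image_withLenWeight_subset L m).antisymm fun p hp => ?_
  rw [mem_coe, mem_smallPartitions] at hp
  exact ⟨![L - m + p.1 + 2 * p.2, m - 2 * p.1 - 3 * p.2, p.1, p.2],
    by simp only [withLenWeight, len, weight, Set.mem_ofPred_eq, Matrix.cons_val_zero,
      Matrix.cons_val_one, Matrix.cons_val]; omega, rfl⟩

lemma ncard_withLenWeight_le (L m : ℕ) : (withLenWeight L m).ncard ≤ #(smallPartitions m) := by
  rw [← (injOn_withLenWeight L m).ncard_image, ← Set.ncard_coe_finset]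
  exact Set.ncard_le_ncard (image_withLenWeight_subset L m) (finite_toSet _)

lemma ncard_withLenWeight_of_le (h : m ≤ L) :
    (withLenWeight L m).ncard = #(smallPartitions m) := by
  rw [← (injOn_withLenWeight L m).ncard_image, image_withLenWeight_of_le h, Set.ncard_coe_finset]

lemma weight_lt_of_sum_eq_ordOf (he : 0 < e) (hd : 0 < d) {c : Fin 4 → ℕ}
    (hc : c ∈ Fac (gen e d) n) (hmax : ∑ i, c i = ordOf (gen e d) n) : weight c < e := by
  by_contra! hle
  obtain ⟨k, hk⟩ := Nat.exists_eq_add_of_le hle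
  obtain ⟨c', hc'⟩ := exists_mem_withLenWeight (L := len c + d) (m := k)
    (by have := weight_le_three_mul_len c; omega)
  have hfac : c' ∈ Fac (gen e d) n := by
    rw [mem_fac_gen, hc'.1, hc'.2, ← mem_fac_gen.1 hc, hk]
    ring
  have := sum_le_ordOf (gen_pos he) hfac
  rw [sum_eq_len, hc'.1, ← hmax, sum_eq_len] at this
  omega

lemma maxFactorizations_eq_withLenWeight (hd : 0 < d) {c₀ : Fin 4 → ℕ}
    (hc₀ : c₀ ∈ Fac (gen e d) n) (hmax : ∑ i, c₀ i = ordOf (gen e d) n) :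
    {c ∈ Fac (gen e d) n | ∑ i, c i = ordOf (gen e d) n} =
      withLenWeight (len c₀) (weight c₀) := by
  rw [mem_fac_gen] at hc₀
  ext (c : Fin 4 → ℕ)
  change c ∈ Fac (gen e d) n ∧ ∑ i, c i = ordOf (gen e d) n ↔
    len c = len c₀ ∧ weight c = weight c₀
  rw [mem_fac_gen, ← hmax, sum_eq_len, sum_eq_len]
  constructor
  · rintro ⟨hc, hlen⟩
    refine ⟨hlen, Nat.eq_of_mul_eq_mul_right hd ?_⟩
    rw [hlen] at hc
    omega
  · rintro ⟨hlen, hwt⟩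
    exact ⟨by rw [hlen, hwt, hc₀], hlen⟩

lemma ordOf_gen_pred_mul (he : 0 < e) (hcop : Nat.Coprime e d) :
    ordOf (gen e d) ((e - 1) * e + (e - 1) * d) = e - 1 := by
  obtain ⟨c₀, hc₀⟩ := exists_mem_withLenWeight (L := e - 1) (m := e - 1) (by omega)
  have hfac₀ := mem_fac_gen_of_mem_withLenWeight (e := e) (d := d) hc₀
  refine le_antisymm ?_ (by simpa [sum_eq_len, hc₀.1] using sum_le_ordOf (gen_pos he) hfac₀)
  obtain ⟨c, hc, hmax⟩ := exists_sum_eq_ordOf (gen_pos he) ⟨c₀, hfac₀⟩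
  rw [← hmax, sum_eq_len]
  exact le_of_mul_add_mul_eq_of_coprime hcop (by omega) (mem_fac_gen.1 hc)

lemma dmaxEl_gen_le (he : 0 < e) (hd : 0 < d) (hn : n ∈ Sg (gen e d)) :
    dmaxEl (gen e d) n ≤ #(smallPartitions (e - 1)) := by
  obtain ⟨c₀, hc₀, hmax⟩ := exists_sum_eq_ordOf (gen_pos he) hn
  have hwt := weight_lt_of_sum_eq_ordOf he hd hc₀ hmax
  calc dmaxEl (gen e d) n = (withLenWeight (len c₀) (weight c₀)).ncard := by
        rw [dmaxEl, maxFactorizations_eq_withLenWeight hd hc₀ hmax]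
    _ ≤ #(smallPartitions (weight c₀)) := ncard_withLenWeight_le _ _
    _ ≤ #(smallPartitions (e - 1)) := card_le_card (smallPartitions_mono (by omega))

lemma dmaxEl_gen_pred_mul (he : 0 < e) (hd : 0 < d) (hcop : Nat.Coprime e d) :
    dmaxEl (gen e d) ((e - 1) * e + (e - 1) * d) = #(smallPartitions (e - 1)) := by
  obtain ⟨c₀, hc₀⟩ := exists_mem_withLenWeight (L := e - 1) (m := e - 1) (by omega)
  have hmax : ∑ i, c₀ i = ordOf (gen e d) ((e - 1) * e + (e - 1) * d) := by
    rw [ordOf_gen_pred_mul he hcop, sum_eq_len, hc₀.1]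
  rw [dmaxEl, maxFactorizations_eq_withLenWeight hd (mem_fac_gen_of_mem_withLenWeight hc₀) hmax,
    hc₀.1, hc₀.2, ncard_withLenWeight_of_le le_rfl]

lemma dmax_gen (he : 0 < e) (hd : 0 < d) (hcop : Nat.Coprime e d) :
    dmax (gen e d) = #(smallPartitions (e - 1)) := by
  obtain ⟨c₀, hc₀⟩ := exists_mem_withLenWeight (L := e - 1) (m := e - 1) (by omega)
  refine IsGreatest.csSup_eq ⟨⟨_, ⟨c₀, mem_fac_gen_of_mem_withLenWeight hc₀⟩,
    dmaxEl_gen_pred_mul he hd hcop⟩, ?_⟩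
  rintro _ ⟨n, hn, rfl⟩
  exact dmaxEl_gen_le he hd hn

end ArithmeticGenerators

open ArithmeticGenerators

/-- The embedding dimension 4 arithmetic case: `d_max(⟨e, e+d, e+2d, e+3d⟩)` is the
nearest integer to `(e+2)² / 12`. -/
theorem stmt19 (e d : ℕ) (he : 4 ≤ e) (hgcd : Nat.gcd e d = 1) :
    (dmax (fun i : Fin 4 => e + (i : ℕ) * d) : ℤ) = round (((e : ℚ) + 2) ^ 2 / 12) := by
  have hd : 0 < d := Nat.pos_of_ne_zero fun hd => by simp [hd] at hgcd; omega
  have hround := round_natCast_div_twelve ((e + 2) ^ 2)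
  push_cast at hround
  rw [hround, show (fun i : Fin 4 => e + (i : ℕ) * d) = gen e d from rfl,
    dmax_gen (by omega) hd hgcd, card_smallPartitions, show e - 1 + 3 = e + 2 by omega]
  norm_cast
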